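/- arXiv:1703.04773 — 2 statements merged into one kernel-verified Lean document; each statement's English description precedes it below -/
import Mathlib

section
/- Let X = {f entire : there exists R > 1 with limsup_n |c_n(f)|·(n!)²·R^n = ∞}, where c_n(f) = ∏_{j=0}^{n-1} (f^{(j)}(0))^{2^{n-1-j}}. Then 0 is not in the closure of X in the topology of uniform convergence on compact sets: there is no sequence (f_k) of functions in X that converges to the zero function uniformly on every compact subset of ℂ. -/
open Filter

/-- `c_n(f) = ∏_{j=0}^{n-1} (f^{(j)}(0))^{2^{n-1-j}}`. -/
noncomputable def c (n : ℕ) (f : ℂ → ℂ) : ℂ :=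
  ∏ j ∈ Finset.range n, (iteratedDeriv j f 0) ^ 2 ^ (n - 1 - j)

/-- Membership in `X`: `f` is entire and there is `R > 1` with
`limsup_n |c_n(f)|·(n!)²·Rⁿ = ∞`. -/
noncomputable def memX (f : ℂ → ℂ) : Prop :=
  Differentiable ℂ f ∧ ∃ R : ℝ, 1 < R ∧ ∀ M : ℝ, ∃ᶠ n in atTop,
    M ≤ ‖c n f‖ * (n.factorial : ℝ) ^ 2 * R ^ n

/-! If `f` is entire and `|f| ≤ ε` on the unit disc, Cauchy's estimate gives `|f⁽ʲ⁾(0)| ≤ j! ε`.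
Since `c (n + 1) f = c n f ^ 2 * f⁽ⁿ⁾(0)`, the weight of `j!` in `c n f` halves at each step, so
the factorials only cost a factor `8 ^ 2 ^ n` and `|c n f| ≲ (8 ε) ^ 2 ^ n`. For `ε = 1/16` this
doubly exponential decay beats `(n!)² Rⁿ` whatever `R` is, so no `f` that small on the unit disc
lies in `X`. -/

lemma c_succ (n : ℕ) (f : ℂ → ℂ) : c (n + 1) f = c n f ^ 2 * iteratedDeriv n f 0 := by
  rw [c, c, Finset.prod_range_succ, ← Finset.prod_pow, Nat.add_sub_cancel, Nat.sub_self,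
    pow_zero, pow_one]
  congr 1
  refine Finset.prod_congr rfl fun j hj => ?_
  have hjn : n - j = n - 1 - j + 1 := by have := Finset.mem_range.mp hj; omega
  rw [← pow_mul, hjn, pow_succ]

/-- The exponent `h n = n ^ 2 + 2 n + 3` satisfies `h (n + 1) + n ^ 2 = 2 h n`, which is what
makes the induction close. -/
lemma norm_c_le {f : ℂ → ℂ} {ε : ℝ} (hder : ∀ j, ‖iteratedDeriv j f 0‖ ≤ ε * 2 ^ j ^ 2)
    (n : ℕ) : ε * ‖c n f‖ * 2 ^ (n ^ 2 + 2 * n + 3) ≤ (8 * ε) ^ 2 ^ n := by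
  have hε : 0 ≤ ε := by simpa using (norm_nonneg _).trans (hder 0)
  induction n with
  | zero => norm_num [c, mul_comm]
  | succ n ih =>
    calc ε * ‖c (n + 1) f‖ * 2 ^ ((n + 1) ^ 2 + 2 * (n + 1) + 3)
        = ε * ‖c n f‖ ^ 2 * ‖iteratedDeriv n f 0‖ * 2 ^ ((n + 1) ^ 2 + 2 * (n + 1) + 3) := by
          rw [c_succ, norm_mul, norm_pow]; ring
      _ ≤ ε * ‖c n f‖ ^ 2 * (ε * 2 ^ n ^ 2) * 2 ^ ((n + 1) ^ 2 + 2 * (n + 1) + 3) := by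
          gcongr; exact hder n
      _ = (ε * ‖c n f‖ * 2 ^ (n ^ 2 + 2 * n + 3)) ^ 2 := by ring
      _ ≤ ((8 * ε) ^ 2 ^ n) ^ 2 := by gcongr
      _ = (8 * ε) ^ 2 ^ (n + 1) := by rw [← pow_mul, pow_succ]

lemma factorial_le_two_pow_sq (n : ℕ) : n.factorial ≤ 2 ^ n ^ 2 :=
  calc n.factorial ≤ n ^ n := Nat.factorial_le_pow n
    _ ≤ (2 ^ n) ^ n := Nat.pow_le_pow_left Nat.lt_two_pow_self.le n
    _ = 2 ^ n ^ 2 := by rw [← pow_mul, sq]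

lemma eventually_quadratic_lt_two_pow (a b d : ℕ) :
    ∀ᶠ n : ℕ in atTop, a * n ^ 2 + b * n + d < 2 ^ n := by
  set s : ℝ := a + b + d
  filter_upwards [(isLittleO_pow_const_const_pow_of_one_lt (R := ℝ) 2 one_lt_two).bound
    (inv_pos.mpr (by positivity : (0 : ℝ) < s + 1)), eventually_ge_atTop 1] with n hn hn1
  have hn2 : (n : ℝ) ^ 2 ≤ (s + 1)⁻¹ * 2 ^ n := by simpa using hn
  have hn1' : (1 : ℝ) ≤ n := by exact_mod_cast hn1
  have : (a * n ^ 2 + b * n + d : ℝ) < 2 ^ n :=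
    calc (a * n ^ 2 + b * n + d : ℝ) ≤ s * n ^ 2 := by
          have hnn : (n : ℝ) ≤ n ^ 2 := by nlinarith
          have h1n : (1 : ℝ) ≤ n ^ 2 := by nlinarith
          simp only [s]
          nlinarith [mul_le_mul_of_nonneg_left hnn (Nat.cast_nonneg b : (0 : ℝ) ≤ b),
            mul_le_mul_of_nonneg_left h1n (Nat.cast_nonneg d : (0 : ℝ) ≤ d)]
      _ ≤ s * ((s + 1)⁻¹ * 2 ^ n) := by gcongr
      _ < 2 ^ n := by
          rw [← mul_assoc, ← div_eq_mul_inv]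
          exact mul_lt_of_lt_one_left (by positivity)
            ((div_lt_one (by positivity)).mpr (by linarith))
  exact_mod_cast this

lemma norm_c_mul_two_pow_two_pow_le {f : ℂ → ℂ}
    (hder : ∀ j, ‖iteratedDeriv j f 0‖ ≤ j.factorial * 16⁻¹) (n : ℕ) :
    ‖c n f‖ * 2 ^ 2 ^ n ≤ 16 := by
  have hder' (j : ℕ) : ‖iteratedDeriv j f 0‖ ≤ 16⁻¹ * 2 ^ j ^ 2 :=
    (hder j).trans <| by rw [mul_comm]; gcongr; exact_mod_cast factorial_le_two_pow_sq j
  have h : 16⁻¹ * ‖c n f‖ ≤ (2 ^ 2 ^ n)⁻¹ :=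
    calc 16⁻¹ * ‖c n f‖ ≤ 16⁻¹ * ‖c n f‖ * 2 ^ (n ^ 2 + 2 * n + 3) :=
          le_mul_of_one_le_right (by positivity) (one_le_pow₀ one_le_two)
      _ ≤ (8 * 16⁻¹) ^ 2 ^ n := norm_c_le hder' n
      _ = (2 ^ 2 ^ n)⁻¹ := by rw [← inv_pow]; norm_num
  calc ‖c n f‖ * 2 ^ 2 ^ n = 16 * (16⁻¹ * ‖c n f‖) * 2 ^ 2 ^ n := by ring
    _ ≤ 16 * (2 ^ 2 ^ n)⁻¹ * 2 ^ 2 ^ n := by gcongr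
    _ = 16 := by field_simp

lemma eventually_norm_c_mul_lt_one {f : ℂ → ℂ}
    (hder : ∀ j, ‖iteratedDeriv j f 0‖ ≤ j.factorial * 16⁻¹) {R : ℝ} (hR : 0 ≤ R) :
    ∀ᶠ n in atTop, ‖c n f‖ * (n.factorial : ℝ) ^ 2 * R ^ n < 1 := by
  obtain ⟨L, hL⟩ := pow_unbounded_of_one_lt R one_lt_two
  filter_upwards [eventually_quadratic_lt_two_pow 2 L 4] with n hn
  have hn' : (16 : ℝ) * 2 ^ (2 * n ^ 2 + L * n) < 2 ^ 2 ^ n := by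
    rw [show (16 : ℝ) = 2 ^ 4 by norm_num, ← pow_add]
    exact pow_lt_pow_right₀ one_lt_two (by omega)
  have hfact : (n.factorial : ℝ) ^ 2 * R ^ n ≤ 2 ^ (2 * n ^ 2 + L * n) := by
    calc (n.factorial : ℝ) ^ 2 * R ^ n ≤ ((2 : ℝ) ^ n ^ 2) ^ 2 * (2 ^ L) ^ n := by
          gcongr; exact_mod_cast factorial_le_two_pow_sq n
      _ = 2 ^ (2 * n ^ 2 + L * n) := by ring
  rw [← mul_lt_mul_iff_left₀ (by positivity : (0 : ℝ) < 2 ^ 2 ^ n), one_mul]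
  calc ‖c n f‖ * (n.factorial : ℝ) ^ 2 * R ^ n * 2 ^ 2 ^ n
      = ‖c n f‖ * 2 ^ 2 ^ n * ((n.factorial : ℝ) ^ 2 * R ^ n) := by ring
    _ ≤ 16 * 2 ^ (2 * n ^ 2 + L * n) := by gcongr; exact norm_c_mul_two_pow_two_pow_le hder n
    _ < 2 ^ 2 ^ n := hn'

/-- `0` is not in the closure of `X`: no sequence in `X` converges to `0`
uniformly on every compact subset of `ℂ`. -/
theorem zero_not_in_closure_X :
    ¬ ∃ f : ℕ → ℂ → ℂ, (∀ k, memX (f k)) ∧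
      ∀ R > (0 : ℝ), ∀ ε > (0 : ℝ), ∃ K : ℕ, ∀ k ≥ K, ∀ z : ℂ,
        ‖z‖ ≤ R → ‖f k z‖ < ε := by
  rintro ⟨f, hmem, hconv⟩
  obtain ⟨K, hK⟩ := hconv 1 one_pos 16⁻¹ (by norm_num)
  obtain ⟨hdiff, R, hR, hfreq⟩ := hmem K
  have hcauchy (j : ℕ) : ‖iteratedDeriv j (f K) 0‖ ≤ j.factorial * 16⁻¹ := by
    simpa using Complex.norm_iteratedDeriv_le_of_forall_mem_sphere_norm_le j one_pos
      hdiff.diffContOnCl fun z hz => (hK K le_rfl z (by simp_all)).le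
  obtain ⟨n, hbig, hsmall⟩ :=
    ((hfreq 1).and_eventually (eventually_norm_c_mul_lt_one hcauchy (by linarith))).exists
  exact hsmall.not_ge hbig
end

section
/- Let a, b ∈ ℂ and let P be the map on entire functions defined by P(g)(z) = g(z+a)·g(z+b). If g and f are entire functions and there is a strictly increasing sequence (k_l) of natural numbers such that P^{k_l}(g) converges to f uniformly on every compact subset of ℂ, then either f is identically zero or f(z) ≠ 0 for every z ∈ ℂ. -/
/-- The polynomial map `P(g)(z) = g(z+a)·g(z+b)` on functions `ℂ → ℂ`. -/
noncomputable def P (a b : ℂ) (g : ℂ → ℂ) : ℂ → ℂ := fun z => g (z + a) * g (z + b)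

/-!
Suppose `f` vanishes at `z₀` but not identically. By Hurwitz's theorem the iterates `Pⁿ g` of the
subsequence have zeros `p` near `z₀`. Such a zero comes from a zero `w` of `g` with
`p = w - i a - j b`, `i + j = n`, at which `Pⁿ g` vanishes to order `C(n, i)`; moving `p` by at
most `‖a - b‖` one may take `0 < i < n` (when `n ≥ 2`), so the order is at least `n`. Thus
`P^{k_l} g` has zeros of order `k_l → ∞` in a fixed compact set, and near an accumulation point
`q₀` of them the maximum principle gives `‖P^{k_l} g‖ ≤ (3/4)^{k_l} C`. Hence `f` vanishes near
`q₀`, contradicting the identity theorem.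
-/

open Filter Metric Set Topology

lemma Nat.le_choose_of_pos_of_lt {n i : ℕ} (hi : 0 < i) (hin : i < n) : n ≤ n.choose i := by
  obtain ⟨m, rfl⟩ : ∃ m, n = m + 1 := ⟨n - 1, by omega⟩
  obtain ⟨r, rfl⟩ : ∃ r, i = r + 1 := ⟨i - 1, by omega⟩
  have hr : r + 1 ≤ m.choose r :=
    Nat.choose_succ_self_right r ▸ Nat.choose_le_choose r (by omega)
  have := Nat.add_one_mul_choose_eq m r
  exact Nat.le_of_mul_le_mul_right (by nlinarith) (Nat.succ_pos r)

lemma tendstoLocallyUniformly_of_forall_norm_le {α E ι : Type*} [SeminormedAddCommGroup α]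
    [SeminormedAddCommGroup E] {F : ι → α → E} {f : α → E} {l : Filter ι}
    (h : ∀ R > (0 : ℝ), ∀ ε > (0 : ℝ), ∀ᶠ i in l, ∀ z, ‖z‖ ≤ R → ‖F i z - f z‖ < ε) :
    TendstoLocallyUniformly F f l := by
  refine Metric.tendstoLocallyUniformly_iff.2 fun ε hε x =>
    ⟨ball 0 (‖x‖ + 1), isOpen_ball.mem_nhds (by simp), ?_⟩
  filter_upwards [h (‖x‖ + 1) (by positivity) ε hε] with i hi y hy
  rw [dist_comm, dist_eq_norm]
  exact hi y (mem_ball_zero_iff.1 hy).le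

lemma TendstoLocallyUniformly.comp_tendsto {α β ι ι' : Type*} [TopologicalSpace α]
    [UniformSpace β] {F : ι → α → β} {f : α → β} {l : Filter ι} {l' : Filter ι'} {u : ι' → ι}
    (h : TendstoLocallyUniformly F f l) (hu : Tendsto u l' l) :
    TendstoLocallyUniformly (fun i => F (u i)) f l' := fun s hs x =>
  let ⟨t, ht, hev⟩ := h s hs x
  ⟨t, ht, hu.eventually hev⟩

lemma AnalyticAt.exists_sphere_ne_zero {𝕜 E : Type*} [NontriviallyNormedField 𝕜]
    [NormedAddCommGroup E] [NormedSpace 𝕜 E] {f : 𝕜 → E} {z₀ : 𝕜} (hf : AnalyticAt 𝕜 f z₀)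
    (h : ¬∀ᶠ z in 𝓝 z₀, f z = 0) : ∃ r > 0, ∀ z ∈ sphere z₀ r, f z ≠ 0 := by
  obtain ⟨ε, hε, hne⟩ := Metric.eventually_nhds_iff.1 <|
    eventually_nhdsWithin_iff.1 (hf.eventually_eq_zero_or_eventually_ne_zero.resolve_left h)
  refine ⟨ε / 2, half_pos hε, fun z hz => hne ?_ ?_⟩
  · rw [mem_sphere.1 hz]; linarith
  · exact ne_of_mem_sphere hz (half_pos hε).ne'

lemma exists_zero_of_norm_lt_of_le_on_sphere {h : ℂ → ℂ} {z₀ : ℂ} {r c : ℝ}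
    (hh : DiffContOnCl ℂ h (ball z₀ r)) (hr : 0 < r) (hsphere : ∀ z ∈ sphere z₀ r, c ≤ ‖h z‖)
    (hz₀ : ‖h z₀‖ < c) : ∃ p ∈ closedBall z₀ r, h p = 0 := by
  by_contra! hne
  rw [← closure_ball z₀ hr.ne'] at hne
  have hinv : DiffContOnCl ℂ (fun z => (h z)⁻¹) (ball z₀ r) :=
    ⟨hh.differentiableOn.inv fun z hz => hne z (subset_closure hz), hh.continuousOn.inv₀ hne⟩
  have hc : 0 < c := (norm_nonneg _).trans_lt hz₀
  have hmax := Complex.norm_le_of_forall_mem_frontier_norm_le isBounded_ball hinv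
    (C := c⁻¹) (fun z hz => ?_) (subset_closure (mem_ball_self hr))
  · rw [norm_inv] at hmax
    have := (inv_le_inv₀ (norm_pos_iff.2 (hne z₀ (subset_closure (mem_ball_self hr)))) hc).1 hmax
    linarith
  · rw [frontier_ball z₀ hr.ne'] at hz
    rw [norm_inv]
    exact inv_anti₀ hc (hsphere z hz)

/-- The cofactor is required to be entire, not merely analytic at `q`: `VanishesToOrder.norm_le`
applies the maximum principle to it on a whole disc. -/
def VanishesToOrder (u : ℂ → ℂ) (q : ℂ) (n : ℕ) : Prop :=
  ∃ ψ : ℂ → ℂ, Differentiable ℂ ψ ∧ ∀ z, u z = (z - q) ^ n * ψ z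

namespace VanishesToOrder

variable {u v : ℂ → ℂ} {q t : ℂ} {m n : ℕ}

lemma zero (hu : Differentiable ℂ u) (q : ℂ) : VanishesToOrder u q 0 :=
  ⟨u, hu, fun z => by rw [pow_zero, one_mul]⟩

lemma one (hu : Differentiable ℂ u) (hq : u q = 0) : VanishesToOrder u q 1 := by
  refine ⟨dslope u q, fun z => ?_, fun z => ?_⟩
  · rcases eq_or_ne z q with rfl | hz
    · obtain ⟨p, hp⟩ := hu.analyticAt z
      exact hp.has_fpower_series_dslope_fslope.analyticAt.differentiableAt
    · exact (differentiableAt_dslope_of_ne hz).2 (hu z)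
  · rw [pow_one, ← smul_eq_mul, sub_smul_dslope, hq, sub_zero]

lemma mul (hu : VanishesToOrder u q m) (hv : VanishesToOrder v q n) :
    VanishesToOrder (fun z => u z * v z) q (m + n) := by
  obtain ⟨φ, hφ, hu⟩ := hu
  obtain ⟨ψ, hψ, hv⟩ := hv
  exact ⟨fun z => φ z * ψ z, hφ.mul hψ, fun z => by simp only [hu, hv]; ring⟩

lemma comp_add_const (h : VanishesToOrder u (q + t) n) :
    VanishesToOrder (fun z => u (z + t)) q n := by
  obtain ⟨ψ, hψ, hu⟩ := h
  exact ⟨fun z => ψ (z + t), hψ.comp (differentiable_id.add_const t),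
    fun z => by simp only [hu, add_sub_add_right_eq_sub]⟩

lemma mono (h : VanishesToOrder u q n) (hmn : m ≤ n) : VanishesToOrder u q m := by
  obtain ⟨ψ, hψ, hu⟩ := h
  refine ⟨fun z => (z - q) ^ (n - m) * ψ z, ((differentiable_id.sub_const q).pow _).mul hψ,
    fun z => ?_⟩
  rw [hu, ← mul_assoc, ← pow_add, Nat.add_sub_cancel' hmn]

lemma norm_le (h : VanishesToOrder u q n) {r C : ℝ} (hr : 0 < r)
    (hC : ∀ w ∈ sphere q r, ‖u w‖ ≤ C) {z : ℂ} (hz : z ∈ closedBall q r) :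
    ‖u z‖ ≤ (‖z - q‖ / r) ^ n * C := by
  obtain ⟨ψ, hψ, hu⟩ := h
  have hψC : ‖ψ z‖ ≤ C / r ^ n := by
    refine Complex.norm_le_of_forall_mem_frontier_norm_le isBounded_ball hψ.diffContOnCl
      (fun w hw => ?_) (closure_ball q hr.ne' ▸ hz)
    rw [frontier_ball q hr.ne'] at hw
    have := hC w hw
    rw [hu, norm_mul, norm_pow, ← dist_eq_norm, mem_sphere.1 hw] at this
    rwa [le_div_iff₀' (by positivity)]
  calc ‖u z‖ = ‖z - q‖ ^ n * ‖ψ z‖ := by rw [hu, norm_mul, norm_pow]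
    _ ≤ ‖z - q‖ ^ n * (C / r ^ n) := by gcongr
    _ = (‖z - q‖ / r) ^ n * C := by rw [div_pow]; ring

end VanishesToOrder

section Iterate

variable {a b : ℂ} {g : ℂ → ℂ}

lemma iterate_P_succ (n : ℕ) :
    (P a b)^[n + 1] g = fun z => (P a b)^[n] g (z + a) * (P a b)^[n] g (z + b) :=
  Function.iterate_succ_apply' ..

lemma differentiable_iterate_P (hg : Differentiable ℂ g) (n : ℕ) :
    Differentiable ℂ ((P a b)^[n] g) := by
  induction n with
  | zero => exact hg
  | succ n ih =>
    rw [iterate_P_succ]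
    exact (ih.comp (differentiable_id.add_const a)).mul (ih.comp (differentiable_id.add_const b))

lemma exists_eq_zero_of_iterate_P_eq_zero {n : ℕ} {p : ℂ} (h : (P a b)^[n] g p = 0) :
    ∃ i j : ℕ, i + j = n ∧ g (p + i * a + j * b) = 0 := by
  induction n generalizing p with
  | zero => exact ⟨0, 0, rfl, by simpa using h⟩
  | succ n ih =>
    rw [iterate_P_succ] at h
    rcases mul_eq_zero.1 h with h | h
    · obtain ⟨i, j, rfl, hz⟩ := ih h
      exact ⟨i + 1, j, by omega, by convert hz using 2; push_cast; ring⟩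
    · obtain ⟨i, j, rfl, hz⟩ := ih h
      exact ⟨i, j + 1, by omega, by convert hz using 2; push_cast; ring⟩

/-- `(P a b)^[n] g z` is the product of `g (z + i a + j b) ^ C(n, i)` over `i + j = n`, the
exponents obeying Pascal's rule. -/
lemma vanishesToOrder_iterate_P (hg : Differentiable ℂ g) :
    ∀ {n i j : ℕ} {q : ℂ}, i + j = n → g (q + i * a + j * b) = 0 →
      VanishesToOrder ((P a b)^[n] g) q (n.choose i)
  | 0, i, j, q, hij, hw => by
    obtain ⟨rfl, rfl⟩ : i = 0 ∧ j = 0 := by omega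
    simpa using VanishesToOrder.one hg (by simpa using hw)
  | n + 1, 0, 0, _, hij, _ => by omega
  | n + 1, i + 1, 0, q, hij, hw => by
    obtain rfl : i = n := by omega
    have ha : VanishesToOrder ((P a b)^[i] g) (q + a) (i.choose i) :=
      vanishesToOrder_iterate_P hg (add_zero i) (by convert hw using 2; push_cast; ring)
    rw [iterate_P_succ]
    simpa using ha.comp_add_const.mul
      (.zero ((differentiable_iterate_P hg i).comp (differentiable_id.add_const b)) q)
  | n + 1, 0, j + 1, q, hij, hw => by
    obtain rfl : j = n := by omega
    have hb : VanishesToOrder ((P a b)^[j] g) (q + b) (j.choose 0) :=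
      vanishesToOrder_iterate_P hg (zero_add j) (by convert hw using 2; push_cast; ring)
    rw [iterate_P_succ]
    simpa using (VanishesToOrder.zero ((differentiable_iterate_P hg j).comp
      (differentiable_id.add_const a)) q).mul hb.comp_add_const
  | n + 1, i + 1, j + 1, q, hij, hw => by
    have ha : VanishesToOrder ((P a b)^[n] g) (q + a) (n.choose i) :=
      vanishesToOrder_iterate_P hg (j := j + 1) (by omega) (by convert hw using 2; push_cast; ring)
    have hb : VanishesToOrder ((P a b)^[n] g) (q + b) (n.choose (i + 1)) :=
      vanishesToOrder_iterate_P hg (j := j) (by omega) (by convert hw using 2; push_cast; ring)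
    rw [iterate_P_succ, Nat.choose_succ_succ]
    exact ha.comp_add_const.mul hb.comp_add_const

lemma exists_vanishesToOrder_iterate_P_near (hg : Differentiable ℂ g) {n : ℕ} {p : ℂ}
    (hp : (P a b)^[n] g p = 0) :
    ∃ q, dist q p ≤ ‖a - b‖ ∧ VanishesToOrder ((P a b)^[n] g) q n := by
  obtain ⟨i, j, hij, hw⟩ := exists_eq_zero_of_iterate_P_eq_zero hp
  rcases i with _ | i <;> rcases j with _ | j
  · exact ⟨p, by simp, hij ▸ .zero (differentiable_iterate_P hg 0) p⟩
  · refine ⟨p + b - a, le_of_eq <| by rw [dist_eq_norm, norm_sub_rev]; ring_nf, ?_⟩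
    simpa [Nat.choose_one_right] using vanishesToOrder_iterate_P hg (i := 1) (j := j) (by omega)
      (by convert hw using 2; push_cast; ring)
  · refine ⟨p + a - b, le_of_eq <| by rw [dist_eq_norm]; ring_nf, ?_⟩
    obtain rfl : n = i + 1 := by omega
    have h := vanishesToOrder_iterate_P (a := a) (b := b) hg (i := i) (j := 1) (q := p + a - b) rfl
      (by convert hw using 2; push_cast; ring)
    rwa [Nat.choose_succ_self_right] at h
  · exact ⟨p, by simp, (vanishesToOrder_iterate_P hg hij (by simpa using hw)).mono
      (Nat.le_choose_of_pos_of_lt (by omega) (by omega))⟩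

end Iterate

section Limits

variable {ι : Type*} {F : ι → ℂ → ℂ} {f : ℂ → ℂ} {l : Filter ι}

lemma TendstoLocallyUniformly.eventually_exists_zero (hlim : TendstoLocallyUniformly F f l)
    (hF : ∀ i, Differentiable ℂ (F i)) (hf : Continuous f) {z₀ : ℂ} {r : ℝ} (hr : 0 < r)
    (hsphere : ∀ z ∈ sphere z₀ r, f z ≠ 0) (hz₀ : f z₀ = 0) :
    ∀ᶠ i in l, ∃ p ∈ closedBall z₀ r, F i p = 0 := by
  obtain ⟨w, hw, hmin⟩ := (isCompact_sphere z₀ r).exists_isMinOn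
    (NormedSpace.sphere_nonempty.2 hr.le) hf.norm.continuousOn
  have hm : 0 < ‖f w‖ := norm_pos_iff.2 (hsphere w hw)
  have hunif := (tendstoLocallyUniformlyOn_iff_tendstoUniformlyOn_of_compact
    (isCompact_closedBall z₀ r)).1 hlim.tendstoLocallyUniformlyOn
  filter_upwards [Metric.tendstoUniformlyOn_iff.1 hunif _ (half_pos hm)] with i hi
  refine exists_zero_of_norm_lt_of_le_on_sphere (c := ‖f w‖ / 2) (hF i).diffContOnCl hr
    (fun z hz => ?_) ?_
  · have hclose := hi z (sphere_subset_closedBall hz)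
    have hfz : ‖f w‖ ≤ ‖f z‖ := hmin hz
    rw [dist_eq_norm] at hclose
    linarith [norm_sub_norm_le (f z) (F i z)]
  · simpa [dist_eq_norm, hz₀] using hi z₀ (mem_closedBall_self hr.le)

lemma TendstoLocallyUniformly.eventually_eq_zero_of_vanishesToOrder [l.NeBot]
    (hlim : TendstoLocallyUniformly F f l) (hf : Continuous f) {n : ι → ℕ} {q : ι → ℂ} {q₀ : ℂ}
    (hn : Tendsto n l atTop) (hq : Tendsto q l (𝓝 q₀))
    (hvan : ∀ᶠ i in l, VanishesToOrder (F i) (q i) (n i)) : ∀ᶠ z in 𝓝 q₀, f z = 0 := by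
  obtain ⟨C, hC⟩ := (isCompact_closedBall q₀ 2).exists_bound_of_continuousOn hf.continuousOn
  have hC0 : 0 ≤ C := (norm_nonneg _).trans (hC q₀ (mem_closedBall_self zero_le_two))
  have hunif := (tendstoLocallyUniformlyOn_iff_tendstoUniformlyOn_of_compact
    (isCompact_closedBall q₀ 2)).1 hlim.tendstoLocallyUniformlyOn
  have hbound : ∀ᶠ i in l, ∀ w ∈ closedBall q₀ 2, ‖F i w‖ ≤ C + 1 := by
    filter_upwards [Metric.tendstoUniformlyOn_iff.1 hunif 1 one_pos] with i hi w hw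
    have := hi w hw
    rw [dist_eq_norm] at this
    linarith [norm_le_norm_add_norm_sub' (F i w) (f w), norm_sub_rev (F i w) (f w), hC w hw]
  filter_upwards [ball_mem_nhds q₀ one_half_pos] with z hz
  have hsmall : ∀ᶠ i in l, ‖F i z‖ ≤ (3 / 4) ^ n i * (C + 1) := by
    filter_upwards [hvan, hbound, hq (ball_mem_nhds q₀ (by norm_num : (0 : ℝ) < 1 / 4))]
      with i hvi hbi hqi
    rw [mem_preimage, mem_ball] at hqi
    rw [mem_ball] at hz
    have hzq : ‖z - q i‖ ≤ 3 / 4 := by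
      rw [← dist_eq_norm]; linarith [dist_triangle_right z (q i) q₀]
    calc ‖F i z‖ ≤ (‖z - q i‖ / 1) ^ n i * (C + 1) := by
          refine hvi.norm_le one_pos (fun w hw => hbi w ?_)
            (mem_closedBall_iff_norm.2 (by linarith))
          rw [mem_closedBall]
          linarith [dist_triangle w (q i) q₀, mem_sphere.1 hw]
      _ ≤ (3 / 4) ^ n i * (C + 1) := by rw [div_one]; gcongr
  have hzero : Tendsto (fun i => F i z) l (𝓝 0) := by
    refine squeeze_zero_norm' hsmall ?_
    simpa using ((tendsto_pow_atTop_nhds_zero_of_lt_one (by norm_num : (0 : ℝ) ≤ 3 / 4)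
      (by norm_num)).comp hn).mul_const (C + 1)
  exact tendsto_nhds_unique ((tendstoLocallyUniformlyOn_univ.2 hlim).tendsto_at (mem_univ z)) hzero

end Limits

/-- Any limit (uniformly on compacts, along a subsequence of iterates) of an
orbit of `P` is either identically zero or nowhere zero. -/
theorem accumulation_points_of_orbit (a b : ℂ) (g f : ℂ → ℂ)
    (hg : Differentiable ℂ g) (hf : Differentiable ℂ f)
    (k : ℕ → ℕ) (hk : StrictMono k)
    (hconv : ∀ R > (0 : ℝ), ∀ ε > (0 : ℝ), ∃ L : ℕ, ∀ l ≥ L, ∀ z : ℂ,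
      ‖z‖ ≤ R → ‖(P a b)^[k l] g z - f z‖ < ε) :
    (∀ z : ℂ, f z = 0) ∨ (∀ z : ℂ, f z ≠ 0) := by
  by_contra! ⟨⟨z₁, hz₁⟩, z₀, hz₀⟩
  have hnot : ∀ q, ¬∀ᶠ z in 𝓝 q, f z = 0 := fun q hq => hz₁ <| congrFun
    (AnalyticOnNhd.eq_of_eventuallyEq (fun z _ => hf.analyticAt z) analyticOnNhd_const hq) z₁
  obtain ⟨r, hr, hsphere⟩ := (hf.analyticAt z₀).exists_sphere_ne_zero (hnot z₀)
  have hlim : TendstoLocallyUniformly (fun l => (P a b)^[k l] g) f atTop :=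
    tendstoLocallyUniformly_of_forall_norm_le fun R hR ε hε => eventually_atTop.2 (hconv R hR ε hε)
  have hzeros : ∀ᶠ l in atTop, ∃ q ∈ closedBall z₀ (‖a - b‖ + r),
      VanishesToOrder ((P a b)^[k l] g) q (k l) := by
    filter_upwards [hlim.eventually_exists_zero (fun l => differentiable_iterate_P hg (k l))
      hf.continuous hr hsphere hz₀] with l ⟨p, hp, hp₀⟩
    obtain ⟨q, hqp, hq⟩ := exists_vanishesToOrder_iterate_P_near hg hp₀
    exact ⟨q, mem_closedBall.2 ((dist_triangle q p z₀).trans (add_le_add hqp hp)), hq⟩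
  obtain ⟨L, hL⟩ := eventually_atTop.1 hzeros
  choose! Q hQ hvan using hL
  obtain ⟨q₀, -, φ, hφ, hQφ⟩ :=
    (isCompact_closedBall z₀ _).tendsto_subseq fun i => hQ (i + L) le_add_self
  have hsub : Tendsto (fun i => φ i + L) atTop atTop :=
    (tendsto_add_atTop_nat L).comp hφ.tendsto_atTop
  exact hnot q₀ <| (hlim.comp_tendsto hsub).eventually_eq_zero_of_vanishesToOrder hf.continuous
    (hk.tendsto_atTop.comp hsub) hQφ (.of_forall fun i => hvan _ le_add_self)
end
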